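/- arXiv:2110.08991 — 3 statements merged into one kernel-verified Lean document; each statement's English description precedes it below -/
import Mathlib

section
/- Let x and y_1, ..., y_r be non-negative real numbers, ε > 0, and p ≥ 1. Then (x + Σ_{i=1}^r y_i)^p ≤ (1+ε)^(p-1) · x^p + ((1+ε)·r/ε)^(p-1) · Σ_{i=1}^r y_i^p. -/
open Finset

/-- Convexity of `t ↦ t ^ p` at the points `u * a`, `v * b` with weights `u⁻¹`, `v⁻¹`. -/
theorem Real.add_rpow_le_of_inv_add_inv_eq_one {a b u v p : ℝ} (ha : 0 ≤ a) (hb : 0 ≤ b)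
    (hu : 0 < u) (hv : 0 < v) (huv : u⁻¹ + v⁻¹ = 1) (hp : 1 ≤ p) :
    (a + b) ^ p ≤ u ^ (p - 1) * a ^ p + v ^ (p - 1) * b ^ p := by
  have hconv := (convexOn_rpow hp).2 (Set.mem_Ici.2 (mul_nonneg hu.le ha))
    (Set.mem_Ici.2 (mul_nonneg hv.le hb)) (inv_nonneg.2 hu.le) (inv_nonneg.2 hv.le) huv
  have hweight {w c : ℝ} (hw : 0 < w) (hc : 0 ≤ c) :
      w⁻¹ * (w * c) ^ p = w ^ (p - 1) * c ^ p := by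
    rw [Real.mul_rpow hw.le hc, Real.rpow_sub_one hw.ne']
    ring
  simpa only [smul_eq_mul, inv_mul_cancel_left₀ hu.ne', inv_mul_cancel_left₀ hv.ne',
    hweight hu ha, hweight hv hb] using hconv

theorem mmr_lemma_A1 (r : ℕ) (x : ℝ) (y : Fin r → ℝ) (ε p : ℝ)
    (hx : 0 ≤ x) (hy : ∀ i, 0 ≤ y i) (hε : 0 < ε) (hp : 1 ≤ p) :
    (x + ∑ i, y i) ^ p ≤
      (1 + ε) ^ (p - 1) * x ^ p + ((1 + ε) * r / ε) ^ (p - 1) * ∑ i, y i ^ p := by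
  have hweights : (1 + ε)⁻¹ + ((1 + ε) / ε)⁻¹ = 1 := by
    field_simp
  have hsum : (∑ i, y i) ^ p ≤ (r : ℝ) ^ (p - 1) * ∑ i, y i ^ p := by
    simpa using Real.rpow_sum_le_const_mul_sum_rpow_of_nonneg univ (f := y) hp fun i _ => hy i
  calc (x + ∑ i, y i) ^ p
      ≤ (1 + ε) ^ (p - 1) * x ^ p + ((1 + ε) / ε) ^ (p - 1) * (∑ i, y i) ^ p :=
        Real.add_rpow_le_of_inv_add_inv_eq_one hx (Fintype.sum_nonneg hy)
          (by positivity) (by positivity) hweights hp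
    _ ≤ (1 + ε) ^ (p - 1) * x ^ p +
          ((1 + ε) / ε) ^ (p - 1) * ((r : ℝ) ^ (p - 1) * ∑ i, y i ^ p) := by
        gcongr
    _ = (1 + ε) ^ (p - 1) * x ^ p + ((1 + ε) * r / ε) ^ (p - 1) * ∑ i, y i ^ p := by
        rw [← mul_assoc, ← Real.mul_rpow (by positivity) (by positivity), div_mul_eq_mul_div]
end

section
/- Let X be a finite set of points in ℝ^d with positive weights, let π : ℝ^d → ℝ^m be a map, and suppose that for all x, y ∈ X, (1−ε)·‖x−y‖ ≤ ‖π(x)−π(y)‖ ≤ (1+ε)·‖x−y‖ for some 0 < ε < 1. Let cost(X) = min_{c∈ℝ^d} Σ_{x∈X} w(x)·‖x−c‖² and cost(π(X)) = min_{c∈ℝ^m} Σ_{x∈X} w(x)·‖π(x)−c‖². Then cost(π(X)) ≤ (1+ε)²·cost(X). -/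
open Finset

/-!
The weighted 1-means cost equals `(2W)⁻¹ ∑ᵢ ∑ⱼ wᵢ wⱼ ‖xᵢ - xⱼ‖²`, where `W = ∑ᵢ wᵢ`: the optimal
center is the weighted centroid, by the parallel axis identity, and applying that identity once
more with each point as center turns the cost into the pairwise sum. The cost therefore depends
only on pairwise distances, so expanding each of them by at most `1 + ε` expands the cost by at
most `(1 + ε)²`.
-/

section

variable {ι E F : Type*} [NormedAddCommGroup E] [NormedAddCommGroup F] {s : Finset ι} {w : ι → ℝ}

noncomputable def oneMeansCost (s : Finset ι) (w : ι → ℝ) (f : ι → E) : ℝ :=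
  ⨅ c : E, ∑ i ∈ s, w i * ‖f i - c‖ ^ 2

theorem oneMeansCost_eq_zero_of_forall_eq_zero (hw : ∀ i ∈ s, w i = 0) (f : ι → E) :
    oneMeansCost s w f = 0 := by
  have h : ∀ c : E, ∑ i ∈ s, w i * ‖f i - c‖ ^ 2 = 0 :=
    fun c => sum_eq_zero fun i hi => by rw [hw i hi, zero_mul]
  simp only [oneMeansCost, h, ciInf_const]

variable [InnerProductSpace ℝ E] [InnerProductSpace ℝ F]

theorem Finset.sum_smul_sub_centerMass (hW : ∑ i ∈ s, w i ≠ 0) (f : ι → E) :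
    ∑ i ∈ s, w i • (f i - s.centerMass w f) = 0 := by
  simp only [smul_sub, sum_sub_distrib]
  rw [centerMass, ← sum_smul, smul_smul, mul_inv_cancel₀ hW, one_smul, sub_self]

theorem Finset.sum_mul_norm_sub_sq_eq (hW : ∑ i ∈ s, w i ≠ 0) (f : ι → E) (c : E) :
    ∑ i ∈ s, w i * ‖f i - c‖ ^ 2 =
      ∑ i ∈ s, w i * ‖f i - s.centerMass w f‖ ^ 2 +
        (∑ i ∈ s, w i) * ‖s.centerMass w f - c‖ ^ 2 := by
  set μ := s.centerMass w f
  have hcross : ∑ i ∈ s, w i * inner ℝ (f i - μ) (μ - c) = 0 :=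
    calc ∑ i ∈ s, w i * inner ℝ (f i - μ) (μ - c)
        = inner ℝ (∑ i ∈ s, w i • (f i - μ)) (μ - c) := by
          simp only [sum_inner, real_inner_smul_left]
      _ = 0 := by rw [sum_smul_sub_centerMass hW, inner_zero_left]
  have hsplit : ∀ i, w i * ‖f i - c‖ ^ 2 =
      w i * ‖f i - μ‖ ^ 2 + 2 * (w i * inner ℝ (f i - μ) (μ - c)) + w i * ‖μ - c‖ ^ 2 := by
    intro i
    rw [← sub_add_sub_cancel (f i) μ c, norm_add_sq_real]
    ring
  simp only [hsplit, sum_add_distrib, ← mul_sum, hcross, ← sum_mul]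
  ring

theorem Finset.sum_sum_mul_mul_norm_sub_sq_eq (hW : ∑ i ∈ s, w i ≠ 0) (f : ι → E) :
    ∑ i ∈ s, ∑ j ∈ s, w i * w j * ‖f i - f j‖ ^ 2 =
      2 * (∑ i ∈ s, w i) * ∑ i ∈ s, w i * ‖f i - s.centerMass w f‖ ^ 2 := by
  set μ := s.centerMass w f
  calc ∑ i ∈ s, ∑ j ∈ s, w i * w j * ‖f i - f j‖ ^ 2
      = ∑ j ∈ s, w j * ∑ i ∈ s, w i * ‖f i - f j‖ ^ 2 := by
        rw [sum_comm]
        simp only [mul_sum, mul_left_comm (w _) (w _), mul_assoc]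
    _ = ∑ j ∈ s, w j * (∑ i ∈ s, w i * ‖f i - μ‖ ^ 2 + (∑ i ∈ s, w i) * ‖f j - μ‖ ^ 2) := by
        refine sum_congr rfl fun j _ => ?_
        rw [sum_mul_norm_sub_sq_eq hW f (f j), norm_sub_rev μ]
    _ = 2 * (∑ i ∈ s, w i) * ∑ i ∈ s, w i * ‖f i - μ‖ ^ 2 := by
        simp only [mul_add, sum_add_distrib, ← sum_mul, mul_left_comm (w _) (∑ i ∈ s, w i),
          ← mul_sum]
        ring

theorem oneMeansCost_eq_sum_centerMass (hW : 0 < ∑ i ∈ s, w i) (f : ι → E) :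
    oneMeansCost s w f = ∑ i ∈ s, w i * ‖f i - s.centerMass w f‖ ^ 2 := by
  have hle : ∀ c, ∑ i ∈ s, w i * ‖f i - s.centerMass w f‖ ^ 2 ≤ ∑ i ∈ s, w i * ‖f i - c‖ ^ 2 :=
    fun c => (sum_mul_norm_sub_sq_eq hW.ne' f c).symm ▸
      le_add_of_nonneg_right (mul_nonneg hW.le (sq_nonneg _))
  exact le_antisymm (ciInf_le ⟨_, Set.forall_mem_range.2 hle⟩ _) (le_ciInf hle)

theorem oneMeansCost_eq_sum_sum (hW : 0 < ∑ i ∈ s, w i) (f : ι → E) :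
    oneMeansCost s w f =
      (2 * ∑ i ∈ s, w i)⁻¹ * ∑ i ∈ s, ∑ j ∈ s, w i * w j * ‖f i - f j‖ ^ 2 := by
  rw [oneMeansCost_eq_sum_centerMass hW, sum_sum_mul_mul_norm_sub_sq_eq hW.ne', ← mul_assoc,
    inv_mul_cancel₀ (by positivity), one_mul]

theorem oneMeansCost_le_of_norm_sub_le (hw : ∀ i ∈ s, 0 ≤ w i) {f : ι → E} {g : ι → F} {K : ℝ}
    (hgf : ∀ i ∈ s, ∀ j ∈ s, ‖g i - g j‖ ≤ K * ‖f i - f j‖) :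
    oneMeansCost s w g ≤ K ^ 2 * oneMeansCost s w f := by
  rcases (sum_nonneg hw).eq_or_lt with hW | hW
  · have hw0 := (sum_eq_zero_iff_of_nonneg hw).1 hW.symm
    rw [oneMeansCost_eq_zero_of_forall_eq_zero hw0, oneMeansCost_eq_zero_of_forall_eq_zero hw0,
      mul_zero]
  rw [oneMeansCost_eq_sum_sum hW, oneMeansCost_eq_sum_sum hW, mul_left_comm]
  gcongr
  simp only [mul_sum]
  refine sum_le_sum fun i hi => sum_le_sum fun j hj => ?_
  rw [mul_left_comm, ← mul_pow]
  have hwij := mul_nonneg (hw i hi) (hw j hj)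
  gcongr
  exact hgf i hi j hj

end

theorem cost_preserved_under_biLipschitz_general {d m : ℕ}
    (X : Finset (EuclideanSpace ℝ (Fin d))) (w : EuclideanSpace ℝ (Fin d) → ℝ)
    (hw : ∀ x ∈ X, 0 < w x)
    (π : EuclideanSpace ℝ (Fin d) → EuclideanSpace ℝ (Fin m))
    (ε : ℝ)
    (hπ : ∀ x ∈ X, ∀ y ∈ X,
      (1 - ε) * ‖x - y‖ ≤ ‖π x - π y‖ ∧ ‖π x - π y‖ ≤ (1 + ε) * ‖x - y‖) :
    (⨅ c : EuclideanSpace ℝ (Fin m), ∑ x ∈ X, w x * ‖π x - c‖ ^ 2) ≤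
      (1 + ε) ^ 2 * ⨅ c : EuclideanSpace ℝ (Fin d), ∑ x ∈ X, w x * ‖x - c‖ ^ 2 :=
  oneMeansCost_le_of_norm_sub_le (f := id) (fun x hx => (hw x hx).le) fun x hx y hy =>
    (hπ x hx y hy).2

theorem cost_preserved_under_biLipschitz {d m : ℕ}
    (X : Finset (EuclideanSpace ℝ (Fin d))) (w : EuclideanSpace ℝ (Fin d) → ℝ)
    (hw : ∀ x ∈ X, 0 < w x)
    (π : EuclideanSpace ℝ (Fin d) → EuclideanSpace ℝ (Fin m))
    (ε : ℝ) (hε : 0 < ε) (hε1 : ε < 1)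
    (hπ : ∀ x ∈ X, ∀ y ∈ X,
      (1 - ε) * ‖x - y‖ ≤ ‖π x - π y‖ ∧ ‖π x - π y‖ ≤ (1 + ε) * ‖x - y‖) :
    (⨅ c : EuclideanSpace ℝ (Fin m), ∑ x ∈ X, w x * ‖π x - c‖ ^ 2) ≤
      (1 + ε) ^ 2 * ⨅ c : EuclideanSpace ℝ (Fin d), ∑ x ∈ X, w x * ‖x - c‖ ^ 2 :=
  cost_preserved_under_biLipschitz_general X w hw π ε hπ
end

section
/- Let M be a finite set of finitely supported probability measures on ℝ^d, fix p ≥ 1 and α ≥ 1, and let ν' be a probability measure such that (1/|M|)·Σ_{μ∈M} W_p(μ, ν')^p ≤ α · inf_ν (1/|M|)·Σ_{μ∈M} W_p(μ, ν)^p (infimum over measures ν supported on at most n points, with ν' itself such a measure). Define the sensitivity σ(μ) = sup_ν W_p(μ,ν)^p / ((1/|M|)·Σ_{μ'∈M} W_p(μ',ν)^p). Then for every μ ∈ M, σ(μ) ≤ α·2^(p-1)·W_p(μ,ν')^p / ((1/|M|)·Σ_{μ̃∈M} W_p(μ̃,ν')^p) + α·4^(p-1) + 4^(p-1). -/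
open MeasureTheory

/-- The `p`-Wasserstein distance with Euclidean (norm) ground cost, defined as the
infimum over couplings of the `p`-th root of the transport cost. -/
noncomputable def wassersteinDist {E : Type*} [NormedAddCommGroup E] [MeasurableSpace E]
    (p : ℝ) (μ ν : Measure E) : ℝ :=
  sInf {r : ℝ | ∃ γ : Measure (E × E), γ.map Prod.fst = μ ∧ γ.map Prod.snd = ν ∧
    r = (∫ z, ‖z.1 - z.2‖ ^ p ∂γ) ^ (1 / p)}

/-!
Gluing two couplings along their common marginal (by disintegration) and applying Minkowski's
inequality in `L^p` of the glued measure shows that `W_p` satisfies the triangle inequality on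
probability measures of bounded support, hence the relaxed inequality
`W(μ, ρ)^p ≤ 2^(p-1) (W(μ, ν)^p + W(ν, ρ)^p)`.
Through `ν'` it bounds `W(μ_j, ν)^p` by `2^(p-1) (W(μ_j, ν')^p + W(ν', ν)^p)`; through each `μ_i`,
averaged over `i`, it bounds `W(ν', ν)^p` by `2^(p-1)` times the sum of the mean costs at `ν'`
and at `ν`. The approximation hypothesis turns the mean cost at `ν'` into `α` times the mean cost
at `ν`, which is the denominator of the sensitivity.
-/

open ProbabilityTheory

theorem Real.rpow_add_le_mul_rpow_add_rpow {p : ℝ} (hp : 1 ≤ p) {a b : ℝ} (ha : 0 ≤ a)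
    (hb : 0 ≤ b) : (a + b) ^ p ≤ 2 ^ (p - 1) * (a ^ p + b ^ p) := by
  lift a to NNReal using ha
  lift b to NNReal using hb
  exact_mod_cast NNReal.rpow_add_le_mul_rpow_add_rpow a b hp

theorem le_mul_avg_add_avg {k : ℕ} (hk : 0 < k) {b c : ℝ} {x y : Fin k → ℝ}
    (h : ∀ i, b ≤ c * (x i + y i)) :
    b ≤ c * ((1 / k) * ∑ i, x i + (1 / k) * ∑ i, y i) := by
  have hk' : (0 : ℝ) < k := by exact_mod_cast hk
  have hsum : (k : ℝ) * b ≤ c * (∑ i, x i + ∑ i, y i) := by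
    have := Finset.sum_le_sum (s := Finset.univ) fun i _ ↦ h i
    simpa [← Finset.mul_sum, Finset.sum_add_distrib] using this
  rwa [← mul_add, mul_left_comm, one_div_mul_eq_div, le_div_iff₀' hk']

theorem div_le_of_relaxed_triangle {w a b A A' α c : ℝ} (hc : 0 ≤ c) (ha : 0 ≤ a)
    (hA' : 0 < A') (hA : 0 < A) (hw : w ≤ c * (a + b)) (hb : b ≤ c * (A' + A))
    (hA'A : A' ≤ α * A) :
    w / A ≤ α * c * (a / A') + α * c ^ 2 + c ^ 2 := by
  have hca : c * a ≤ α * c * (a / A') * A :=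
    calc c * a = c * (a / A') * A' := by field_simp
      _ ≤ c * (a / A') * (α * A) := by gcongr
      _ = α * c * (a / A') * A := by ring
  have hcb : c * b ≤ c ^ 2 * (α * A + A) :=
    calc c * b ≤ c * (c * (A' + A)) := by gcongr
      _ ≤ c ^ 2 * (α * A + A) := by rw [sq, mul_assoc]; gcongr
  rw [div_le_iff₀ hA]
  linarith

theorem integral_norm_add_rpow_le {X F : Type*} [MeasurableSpace X] [NormedAddCommGroup F]
    {m : Measure X} {p : ℝ} (hp : 1 ≤ p) {f g : X → F}
    (hf : MemLp f (ENNReal.ofReal p) m) (hg : MemLp g (ENNReal.ofReal p) m) :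
    (∫ x, ‖f x + g x‖ ^ p ∂m) ^ (1 / p) ≤
      (∫ x, ‖f x‖ ^ p ∂m) ^ (1 / p) + (∫ x, ‖g x‖ ^ p ∂m) ^ (1 / p) := by
  have hp0 : ENNReal.ofReal p ≠ 0 := by rw [Ne, ENNReal.ofReal_eq_zero, not_le]; linarith
  have h := eLpNorm_add_le hf.1 hg.1 (ENNReal.one_le_ofReal.2 hp)
  rw [(hf.add hg).eLpNorm_eq_integral_rpow_norm hp0 ENNReal.ofReal_ne_top,
    hf.eLpNorm_eq_integral_rpow_norm hp0 ENNReal.ofReal_ne_top,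
    hg.eLpNorm_eq_integral_rpow_norm hp0 ENNReal.ofReal_ne_top,
    ← ENNReal.ofReal_add (by positivity) (by positivity),
    ENNReal.ofReal_le_ofReal_iff (by positivity), ENNReal.toReal_ofReal (by linarith)] at h
  simpa only [one_div, Pi.add_apply] using h

theorem MeasureTheory.Measure.exists_glue {α β γ : Type*} [MeasurableSpace α]
    [MeasurableSpace β] [MeasurableSpace γ] [StandardBorelSpace γ] [Nonempty γ]
    (ρ₁ : Measure (α × β)) (ρ₂ : Measure (β × γ)) [SFinite ρ₁] [IsFiniteMeasure ρ₂]
    (h : ρ₁.snd = ρ₂.fst) :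
    ∃ π : Measure ((α × β) × γ), π.fst = ρ₁ ∧ π.map (fun q ↦ (q.1.2, q.2)) = ρ₂ := by
  have hg : Measurable fun q : (α × β) × γ ↦ (q.1.2, q.2) :=
    measurable_fst.snd.prodMk measurable_snd
  refine ⟨ρ₁ ⊗ₘ ρ₂.condKernel.comap Prod.snd measurable_snd, Measure.fst_compProd _ _, ?_⟩
  conv_rhs => rw [← ρ₂.disintegrate ρ₂.condKernel, ← h]
  ext s hs
  rw [Measure.map_apply hg hs, Measure.compProd_apply (hg hs), Measure.compProd_apply hs,
    Measure.snd, lintegral_map (Kernel.measurable_kernel_prodMk_left hs) measurable_snd]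
  rfl

theorem exists_ae_norm_le_of_measure_compl_finset {E : Type*} [NormedAddCommGroup E]
    [MeasurableSpace E] {μ : Measure E} {s : Finset E} (hs : μ (↑s)ᶜ = 0) :
    ∃ C, ∀ᵐ x ∂μ, ‖x‖ ≤ C :=
  ⟨∑ y ∈ s, ‖y‖, (ae_iff.2 hs).mono fun _ hx ↦
    Finset.single_le_sum (fun y _ ↦ norm_nonneg y) (Finset.mem_coe.1 hx)⟩

section Wasserstein

variable {E : Type*} [NormedAddCommGroup E] [MeasurableSpace E] {p : ℝ}

noncomputable def transportCost (p : ℝ) (γ : Measure (E × E)) : ℝ :=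
  (∫ z, ‖z.1 - z.2‖ ^ p ∂γ) ^ (1 / p)

theorem transportCost_nonneg (p : ℝ) (γ : Measure (E × E)) : 0 ≤ transportCost p γ := by
  unfold transportCost; positivity

theorem wassersteinDist_le_transportCost {μ ν : Measure E} {γ : Measure (E × E)}
    (h₁ : γ.map Prod.fst = μ) (h₂ : γ.map Prod.snd = ν) :
    wassersteinDist p μ ν ≤ transportCost p γ :=
  csInf_le ⟨0, by rintro _ ⟨γ, -, -, rfl⟩; exact transportCost_nonneg p γ⟩ ⟨γ, h₁, h₂, rfl⟩

theorem le_wassersteinDist {μ ν : Measure E} [IsProbabilityMeasure μ] [IsProbabilityMeasure ν]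
    {r : ℝ} (h : ∀ γ : Measure (E × E), γ.map Prod.fst = μ → γ.map Prod.snd = ν →
      r ≤ transportCost p γ) :
    r ≤ wassersteinDist p μ ν :=
  le_csInf ⟨_, μ.prod ν, Measure.fst_prod, Measure.snd_prod, rfl⟩
    (by rintro _ ⟨γ, h₁, h₂, rfl⟩; exact h γ h₁ h₂)

theorem wassersteinDist_nonneg (p : ℝ) (μ ν : Measure E) : 0 ≤ wassersteinDist p μ ν :=
  Real.sInf_nonneg (by rintro _ ⟨γ, -, -, rfl⟩; exact transportCost_nonneg p γ)

theorem transportCost_map_swap (p : ℝ) (γ : Measure (E × E)) :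
    transportCost p (γ.map Prod.swap) = transportCost p γ := by
  rw [transportCost, transportCost]
  congr 1
  exact (integral_map_equiv (MeasurableEquiv.prodComm (α := E) (β := E)) _).trans
    (integral_congr_ae (.of_forall fun z ↦ by simp [MeasurableEquiv.prodComm, norm_sub_rev]))

theorem wassersteinDist_comm (p : ℝ) (μ ν : Measure E) :
    wassersteinDist p μ ν = wassersteinDist p ν μ := by
  suffices h : ∀ μ ν : Measure E,
      {r : ℝ | ∃ γ : Measure (E × E), γ.map Prod.fst = μ ∧ γ.map Prod.snd = ν ∧
        r = transportCost p γ} ⊆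
      {r : ℝ | ∃ γ : Measure (E × E), γ.map Prod.fst = ν ∧ γ.map Prod.snd = μ ∧
        r = transportCost p γ} from
    congrArg sInf ((h μ ν).antisymm (h ν μ))
  rintro μ ν _ ⟨γ, h₁, h₂, rfl⟩
  exact ⟨γ.map Prod.swap, Measure.fst_map_swap.trans h₂, Measure.snd_map_swap.trans h₁,
    (transportCost_map_swap p γ).symm⟩

variable [BorelSpace E]

-- The norm bounds put both costs in `L^p`; for non-integrable costs the Bochner integrals
-- would take the junk value `0` and Minkowski's inequality could fail.
theorem transportCost_le_add [SecondCountableTopology E] (hp : 1 ≤ p)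
    {π : Measure ((E × E) × E)} [IsFiniteMeasure π] {C₁ C₂ C₃ : ℝ}
    (h₁ : ∀ᵐ q ∂π, ‖q.1.1‖ ≤ C₁) (h₂ : ∀ᵐ q ∂π, ‖q.1.2‖ ≤ C₂) (h₃ : ∀ᵐ q ∂π, ‖q.2‖ ≤ C₃) :
    transportCost p (π.map fun q ↦ (q.1.1, q.2)) ≤
      transportCost p π.fst + transportCost p (π.map fun q ↦ (q.1.2, q.2)) := by
  have hc : Measurable fun z : E × E ↦ ‖z.1 - z.2‖ ^ p :=
    (measurable_fst.sub measurable_snd).norm.pow_const p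
  have hmemLp {f : (E × E) × E → E} (hf : Continuous f) {C : ℝ} (hC : ∀ᵐ q ∂π, ‖f q‖ ≤ C) :
      MemLp f (ENNReal.ofReal p) π :=
    MemLp.of_bound hf.aestronglyMeasurable C hC
  simp only [transportCost, Measure.fst]
  rw [integral_map (by fun_prop) hc.aestronglyMeasurable,
    integral_map (by fun_prop) hc.aestronglyMeasurable,
    integral_map (by fun_prop) hc.aestronglyMeasurable]
  simpa only [sub_add_sub_cancel] using integral_norm_add_rpow_le hp
    (hmemLp (f := fun q ↦ q.1.1 - q.1.2) (by fun_prop) (C := C₁ + C₂)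
      (by filter_upwards [h₁, h₂] with q hq₁ hq₂
          using (norm_sub_le _ _).trans (add_le_add hq₁ hq₂)))
    (hmemLp (f := fun q ↦ q.1.2 - q.2) (by fun_prop) (C := C₂ + C₃)
      (by filter_upwards [h₂, h₃] with q hq₂ hq₃
          using (norm_sub_le _ _).trans (add_le_add hq₂ hq₃)))

variable [PolishSpace E]

theorem wassersteinDist_le_transportCost_add (hp : 1 ≤ p) {μ ν ρ : Measure E}
    [IsFiniteMeasure ν] {C₁ C₂ C₃ : ℝ} (hμ : ∀ᵐ x ∂μ, ‖x‖ ≤ C₁) (hν : ∀ᵐ x ∂ν, ‖x‖ ≤ C₂)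
    (hρ : ∀ᵐ x ∂ρ, ‖x‖ ≤ C₃) {γ₁ γ₂ : Measure (E × E)}
    (hγ₁ : γ₁.map Prod.fst = μ) (hγ₁' : γ₁.map Prod.snd = ν)
    (hγ₂ : γ₂.map Prod.fst = ν) (hγ₂' : γ₂.map Prod.snd = ρ) :
    wassersteinDist p μ ρ ≤ transportCost p γ₁ + transportCost p γ₂ := by
  have : IsFiniteMeasure γ₁ :=
    (Measure.isFiniteMeasure_map_iff measurable_snd.aemeasurable).1 (hγ₁' ▸ inferInstance)
  have : IsFiniteMeasure γ₂ :=
    (Measure.isFiniteMeasure_map_iff measurable_fst.aemeasurable).1 (hγ₂ ▸ inferInstance)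
  obtain ⟨π, hπ₁, hπ₂⟩ := Measure.exists_glue γ₁ γ₂ (hγ₁'.trans hγ₂.symm)
  have : IsFiniteMeasure π :=
    (Measure.isFiniteMeasure_map_iff measurable_fst.aemeasurable).1
      (show IsFiniteMeasure π.fst from hπ₁ ▸ inferInstance)
  have hπμ : π.map (fun q ↦ q.1.1) = μ := by
    rw [← hγ₁, ← hπ₁, Measure.fst, Measure.map_map (by fun_prop) (by fun_prop)]; rfl
  have hπν : π.map (fun q ↦ q.1.2) = ν := by
    rw [← hγ₁', ← hπ₁, Measure.fst, Measure.map_map (by fun_prop) (by fun_prop)]; rfl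
  have hπρ : π.map (fun q ↦ q.2) = ρ := by
    rw [← hγ₂', ← hπ₂, Measure.map_map (by fun_prop) (by fun_prop)]; rfl
  refine (wassersteinDist_le_transportCost (γ := π.map fun q ↦ (q.1.1, q.2)) ?_ ?_).trans ?_
  · rw [Measure.map_map (by fun_prop) (by fun_prop), ← hπμ]; rfl
  · rw [Measure.map_map (by fun_prop) (by fun_prop), ← hπρ]; rfl
  · rw [← hπ₁, ← hπ₂]
    exact transportCost_le_add hp (ae_of_ae_map (by fun_prop) (hπμ ▸ hμ))
      (ae_of_ae_map (by fun_prop) (hπν ▸ hν)) (ae_of_ae_map (by fun_prop) (hπρ ▸ hρ))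

theorem wassersteinDist_triangle (hp : 1 ≤ p) {μ ν ρ : Measure E} [IsProbabilityMeasure μ]
    [IsProbabilityMeasure ν] [IsProbabilityMeasure ρ] (hμ : ∃ C, ∀ᵐ x ∂μ, ‖x‖ ≤ C)
    (hν : ∃ C, ∀ᵐ x ∂ν, ‖x‖ ≤ C) (hρ : ∃ C, ∀ᵐ x ∂ρ, ‖x‖ ≤ C) :
    wassersteinDist p μ ρ ≤ wassersteinDist p μ ν + wassersteinDist p ν ρ := by
  obtain ⟨C₁, hμ⟩ := hμ
  obtain ⟨C₂, hν⟩ := hν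
  obtain ⟨C₃, hρ⟩ := hρ
  have : wassersteinDist p μ ρ - wassersteinDist p ν ρ ≤ wassersteinDist p μ ν :=
    le_wassersteinDist fun γ₁ hγ₁ hγ₁' ↦ sub_le_comm.mp <| le_wassersteinDist fun γ₂ hγ₂ hγ₂' ↦
      sub_le_iff_le_add'.mpr <|
        wassersteinDist_le_transportCost_add hp hμ hν hρ hγ₁ hγ₁' hγ₂ hγ₂'
  linarith

theorem wassersteinDist_rpow_le (hp : 1 ≤ p) {μ ν ρ : Measure E} [IsProbabilityMeasure μ]
    [IsProbabilityMeasure ν] [IsProbabilityMeasure ρ] (hμ : ∃ C, ∀ᵐ x ∂μ, ‖x‖ ≤ C)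
    (hν : ∃ C, ∀ᵐ x ∂ν, ‖x‖ ≤ C) (hρ : ∃ C, ∀ᵐ x ∂ρ, ‖x‖ ≤ C) :
    wassersteinDist p μ ρ ^ p ≤
      2 ^ (p - 1) * (wassersteinDist p μ ν ^ p + wassersteinDist p ν ρ ^ p) :=
  (Real.rpow_le_rpow (wassersteinDist_nonneg p μ ρ) (wassersteinDist_triangle hp hμ hν hρ)
    (by linarith)).trans
    (Real.rpow_add_le_mul_rpow_add_rpow hp (wassersteinDist_nonneg _ _ _)
      (wassersteinDist_nonneg _ _ _))

end Wasserstein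

theorem sensitivity_bound_general {d k n : ℕ} (hk : 0 < k) (p α : ℝ) (hp : 1 ≤ p)
    (μs : Fin k → Measure (EuclideanSpace ℝ (Fin d)))
    (hprob : ∀ i, IsProbabilityMeasure (μs i))
    (hfin : ∀ i, ∃ s : Finset (EuclideanSpace ℝ (Fin d)), μs i (↑s)ᶜ = 0)
    (ν' : Measure (EuclideanSpace ℝ (Fin d))) [IsProbabilityMeasure ν']
    (hν' : ∃ t : Finset (EuclideanSpace ℝ (Fin d)), t.card ≤ n ∧ ν' (↑t)ᶜ = 0)
    (happrox : ∀ ν : Measure (EuclideanSpace ℝ (Fin d)), IsProbabilityMeasure ν →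
      (∃ t : Finset (EuclideanSpace ℝ (Fin d)), t.card ≤ n ∧ ν (↑t)ᶜ = 0) →
      (1 / (k : ℝ)) * ∑ i, wassersteinDist p (μs i) ν' ^ p ≤
        α * ((1 / (k : ℝ)) * ∑ i, wassersteinDist p (μs i) ν ^ p))
    (hden' : 0 < (1 / (k : ℝ)) * ∑ i, wassersteinDist p (μs i) ν' ^ p) :
    ∀ (j : Fin k) (ν : Measure (EuclideanSpace ℝ (Fin d))), IsProbabilityMeasure ν →
      (∃ t : Finset (EuclideanSpace ℝ (Fin d)), t.card ≤ n ∧ ν (↑t)ᶜ = 0) →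
      0 < (1 / (k : ℝ)) * ∑ i, wassersteinDist p (μs i) ν ^ p →
      wassersteinDist p (μs j) ν ^ p / ((1 / (k : ℝ)) * ∑ i, wassersteinDist p (μs i) ν ^ p) ≤
        α * 2 ^ (p - 1) *
            (wassersteinDist p (μs j) ν' ^ p /
              ((1 / (k : ℝ)) * ∑ i, wassersteinDist p (μs i) ν' ^ p)) +
          α * 4 ^ (p - 1) + 4 ^ (p - 1) := by
  intro j ν hν hνn hden
  have hμsC i : ∃ C, ∀ᵐ x ∂μs i, ‖x‖ ≤ C :=
    (hfin i).elim fun _ hs ↦ exists_ae_norm_le_of_measure_compl_finset hs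
  have hν'C := hν'.elim fun _ ht ↦ exists_ae_norm_le_of_measure_compl_finset ht.2
  have hνC := hνn.elim fun _ ht ↦ exists_ae_norm_le_of_measure_compl_finset ht.2
  have h4 : (4 : ℝ) ^ (p - 1) = (2 ^ (p - 1)) ^ 2 := by
    rw [sq, ← Real.mul_rpow (by norm_num) (by norm_num)]; norm_num
  rw [h4]
  refine div_le_of_relaxed_triangle (b := wassersteinDist p ν' ν ^ p) (by positivity)
    (Real.rpow_nonneg (wassersteinDist_nonneg _ _ _) _) hden' hden ?_ ?_ (happrox ν hν hνn)
  · have := hprob j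
    exact wassersteinDist_rpow_le hp (hμsC j) hν'C hνC
  · refine le_mul_avg_add_avg hk fun i ↦ ?_
    have := hprob i
    rw [wassersteinDist_comm p (μs i) ν']
    exact wassersteinDist_rpow_le hp hν'C (hμsC i) hνC

theorem sensitivity_bound {d k n : ℕ} (hk : 0 < k) (p α : ℝ) (hp : 1 ≤ p) (hα : 1 ≤ α)
    (μs : Fin k → Measure (EuclideanSpace ℝ (Fin d)))
    (hprob : ∀ i, IsProbabilityMeasure (μs i))
    (hfin : ∀ i, ∃ s : Finset (EuclideanSpace ℝ (Fin d)), μs i (↑s)ᶜ = 0)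
    (ν' : Measure (EuclideanSpace ℝ (Fin d))) [IsProbabilityMeasure ν']
    (hν' : ∃ t : Finset (EuclideanSpace ℝ (Fin d)), t.card ≤ n ∧ ν' (↑t)ᶜ = 0)
    (happrox : ∀ ν : Measure (EuclideanSpace ℝ (Fin d)), IsProbabilityMeasure ν →
      (∃ t : Finset (EuclideanSpace ℝ (Fin d)), t.card ≤ n ∧ ν (↑t)ᶜ = 0) →
      (1 / (k : ℝ)) * ∑ i, wassersteinDist p (μs i) ν' ^ p ≤
        α * ((1 / (k : ℝ)) * ∑ i, wassersteinDist p (μs i) ν ^ p))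
    (hden' : 0 < (1 / (k : ℝ)) * ∑ i, wassersteinDist p (μs i) ν' ^ p) :
    ∀ (j : Fin k) (ν : Measure (EuclideanSpace ℝ (Fin d))), IsProbabilityMeasure ν →
      (∃ t : Finset (EuclideanSpace ℝ (Fin d)), t.card ≤ n ∧ ν (↑t)ᶜ = 0) →
      0 < (1 / (k : ℝ)) * ∑ i, wassersteinDist p (μs i) ν ^ p →
      wassersteinDist p (μs j) ν ^ p / ((1 / (k : ℝ)) * ∑ i, wassersteinDist p (μs i) ν ^ p) ≤
        α * 2 ^ (p - 1) *
            (wassersteinDist p (μs j) ν' ^ p /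
              ((1 / (k : ℝ)) * ∑ i, wassersteinDist p (μs i) ν' ^ p)) +
          α * 4 ^ (p - 1) + 4 ^ (p - 1) :=
  sensitivity_bound_general hk p α hp μs hprob hfin ν' hν' happrox hden'
end
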